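/- arXiv:0711.5004 — 2 statements merged into one kernel-verified Lean document; each statement's English description precedes it below -/
import Mathlib

section
/- Let ε_1 < ε_2 < ⋯ < ε_{l+1} be elements of T = {0,1}^n with l ≥ 2, let D = {δ(ε_i,ε_{i+1}) : 1 ≤ i ≤ l}, and let Δ_1 = max D. Then in the associated graph J, the vertex Δ_1 is adjacent to every other element of D; in particular J has at least |D| − 1 edges. -/
/-- `b(ε) = Σ_i ε_i · 2^i`, the number whose binary digits are given by `ε`. -/
def bval {n : ℕ} (ε : Fin n → Bool) : ℕ :=
  ∑ i, if ε i then 2 ^ (i : ℕ) else 0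

/-- `δ(ε, ε')`: the largest coordinate at which `ε` and `ε'` differ. -/
def delta {n : ℕ} (ε ε' : Fin n → Bool) : ℕ :=
  (Finset.univ.filter fun i => ε i ≠ ε' i).sup Fin.val

/-- `D`, the set of consecutive values `{δ(ε_i, ε_{i+1}) : 1 ≤ i ≤ l}` of a
chain `ε₁ < ⋯ < ε_{l+1}`. -/
def Dset {n l : ℕ} (ε : Fin (l + 1) → Fin n → Bool) : Finset ℕ :=
  Finset.univ.image fun i : Fin l => delta (ε i.castSucc) (ε i.succ)

/-- Adjacency in the graph `J` associated to a chain `ε₁ < ⋯ < ε_{l+1}`: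
its vertices are the elements of `D`, and distinct `a, b ∈ D` are joined iff
there exist `r < s < t` with `{a, b} = {δ(ε_r, ε_s), δ(ε_s, ε_t)}`. -/
def JAdj {n l : ℕ} (ε : Fin (l + 1) → Fin n → Bool) (a b : ℕ) : Prop :=
  a ∈ Dset ε ∧ b ∈ Dset ε ∧ a ≠ b ∧
  ∃ r s t : Fin (l + 1), r < s ∧ s < t ∧
    ({a, b} : Finset ℕ) = {delta (ε r) (ε s), delta (ε s) (ε t)}

open scoped Classical in
/-- The edge set of the graph `J`, recorded as ordered pairs `(a, b)` with `a < b`. -/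
noncomputable def Jedges {n l : ℕ} (ε : Fin (l + 1) → Fin n → Bool) :
    Finset (ℕ × ℕ) :=
  (Dset ε ×ˢ Dset ε).filter fun p => p.1 < p.2 ∧ JAdj ε p.1 p.2

lemma sum_range_two_pow_lt (m : ℕ) : ∑ j ∈ Finset.range m, 2 ^ j < 2 ^ m := by
  induction m with
  | zero => simp
  | succ m ih => rw [Finset.sum_range_succ, pow_succ]; omega

lemma bval_lt_of {n : ℕ} {ε ε' : Fin n → Bool} (d : Fin n)
    (h : ∀ k, d < k → ε k = ε' k) (h1 : ε d = false) (h2 : ε' d = true) :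
    bval ε < bval ε' := by
  classical
  unfold bval
  rw [← Finset.sum_filter_add_sum_filter_not Finset.univ (fun i => d < i)
    (fun i => if ε i then 2 ^ (i : ℕ) else 0),
    ← Finset.sum_filter_add_sum_filter_not Finset.univ (fun i => d < i)
    (fun i => if ε' i then 2 ^ (i : ℕ) else 0)]
  have hA : ∑ i ∈ Finset.univ.filter (fun i => d < i), (if ε i then 2 ^ (i : ℕ) else 0)
      = ∑ i ∈ Finset.univ.filter (fun i => d < i), (if ε' i then 2 ^ (i : ℕ) else 0) :=
    Finset.sum_congr rfl (fun i hi => by rw [h i (Finset.mem_filter.mp hi).2])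
  rw [hA]
  apply Nat.add_lt_add_left
  have hsplit : Finset.univ.filter (fun i : Fin n => ¬ d < i)
      = insert d (Finset.univ.filter (fun i => i < d)) := by
    ext i
    simp only [Finset.mem_filter, Finset.mem_univ, true_and, Finset.mem_insert, not_lt,
      le_iff_lt_or_eq]
    tauto
  rw [hsplit, Finset.sum_insert (by simp), Finset.sum_insert (by simp), h1, h2]
  norm_num
  have hle : ∑ i ∈ Finset.univ.filter (fun i : Fin n => i < d), (if ε i then 2 ^ (i : ℕ) else 0)
      ≤ ∑ i ∈ Finset.univ.filter (fun i : Fin n => i < d), 2 ^ (i : ℕ) :=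
    Finset.sum_le_sum (fun i _ => by by_cases hb : ε i <;> simp [hb])
  have him : ∑ i ∈ Finset.univ.filter (fun i : Fin n => i < d), 2 ^ (i : ℕ)
      = ∑ j ∈ (Finset.univ.filter (fun i : Fin n => i < d)).image Fin.val, 2 ^ j :=
    (Finset.sum_image (fun a _ b _ hab => Fin.val_injective hab)).symm
  have hsub : (Finset.univ.filter (fun i : Fin n => i < d)).image Fin.val
      ⊆ Finset.range d.val := by
    intro j hj
    obtain ⟨i, hi, rfl⟩ := Finset.mem_image.mp hj
    exact Finset.mem_range.mpr (Finset.mem_filter.mp hi).2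
  have hlt : ∑ j ∈ (Finset.univ.filter (fun i : Fin n => i < d)).image Fin.val, 2 ^ j
      ≤ ∑ j ∈ Finset.range d.val, 2 ^ j :=
    Finset.sum_le_sum_of_subset hsub
  have := sum_range_two_pow_lt d.val
  omega

lemma delta_spec {n : ℕ} {ε ε' : Fin n → Bool} (hlt : bval ε < bval ε') :
    ∃ d : Fin n, delta ε ε' = d.val ∧ ε d = false ∧ ε' d = true ∧
      ∀ k, d < k → ε k = ε' k := by
  classical
  have hne : ε ≠ ε' := by rintro rfl; exact lt_irrefl _ hlt
  have hs : (Finset.univ.filter fun i => ε i ≠ ε' i).Nonempty := by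
    rw [Finset.filter_nonempty_iff]
    by_contra h
    push_neg at h
    exact hne (funext fun i => h i (Finset.mem_univ i))
  obtain ⟨d, hd, hsup⟩ := Finset.exists_mem_eq_sup _ hs Fin.val
  have hdd : ε d ≠ ε' d := (Finset.mem_filter.mp hd).2
  have hk : ∀ k, d < k → ε k = ε' k := by
    intro k hdk
    by_contra hkk
    have hmem : k ∈ Finset.univ.filter fun i => ε i ≠ ε' i :=
      Finset.mem_filter.mpr ⟨Finset.mem_univ _, hkk⟩
    have := Finset.le_sup (f := Fin.val) hmem
    rw [hsup] at this
    exact absurd this (not_le.mpr hdk)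
  cases hεd : ε d with
  | false =>
    refine ⟨d, hsup, hεd, ?_, hk⟩
    cases hεd' : ε' d with
    | false => rw [hεd, hεd'] at hdd; simp at hdd
    | true => rfl
  | true =>
    exfalso
    have hεd' : ε' d = false := by
      cases hεd' : ε' d with
      | false => rfl
      | true => rw [hεd, hεd'] at hdd; simp at hdd
    have := bval_lt_of d (fun k hk' => (hk k hk').symm) hεd' hεd
    omega

lemma delta_eq {n : ℕ} {ε ε' : Fin n → Bool} (d : Fin n) (hne : ε d ≠ ε' d)
    (h : ∀ k, d < k → ε k = ε' k) : delta ε ε' = d.val := by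
  unfold delta
  apply le_antisymm
  · apply Finset.sup_le
    intro k hk
    by_contra hlt
    push_neg at hlt
    exact (Finset.mem_filter.mp hk).2 (h k hlt)
  · exact Finset.le_sup (Finset.mem_filter.mpr ⟨Finset.mem_univ _, hne⟩)

lemma delta_triple {n : ℕ} {a b c : Fin n → Bool} (hab : bval a < bval b)
    (hbc : bval b < bval c) : delta a c = max (delta a b) (delta b c) := by
  obtain ⟨d1, h1, ha1, hb1, hk1⟩ := delta_spec hab
  obtain ⟨d2, h2, hb2, hc2, hk2⟩ := delta_spec hbc
  have hne : d1 ≠ d2 := by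
    rintro rfl; rw [hb1] at hb2; simp at hb2
  rcases lt_or_gt_of_ne hne with hlt | hlt
  · have : delta a c = d2.val := by
      apply delta_eq
      · rw [hk1 d2 hlt, hb2, hc2]; simp
      · intro k hk
        rw [hk1 k (lt_trans hlt hk), hk2 k hk]
    have hv : (d1 : ℕ) < d2 := hlt
    rw [this, h1, h2, max_eq_right hv.le]
  · have : delta a c = d1.val := by
      apply delta_eq
      · rw [ha1, ← hk2 d1 hlt, hb1]; simp
      · intro k hk
        rw [hk1 k hk, hk2 k (lt_trans hlt hk)]
    have hv : (d2 : ℕ) < d1 := hlt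
    rw [this, h1, h2, max_eq_left hv.le]

lemma consec_mem {n l : ℕ} (ε : Fin (l + 1) → Fin n → Bool) (i : Fin l) :
    delta (ε i.castSucc) (ε i.succ) ∈ Dset ε :=
  Finset.mem_image.mpr ⟨i, Finset.mem_univ _, rfl⟩

lemma delta_le_sup {n l : ℕ} (ε : Fin (l + 1) → Fin n → Bool)
    (hε : ∀ i j : Fin (l + 1), i < j → bval (ε i) < bval (ε j)) :
    ∀ k : ℕ, ∀ a b : Fin (l + 1), b.val ≤ a.val + 1 + k → a < b →
      delta (ε a) (ε b) ≤ (Dset ε).sup id := by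
  intro k
  induction k with
  | zero =>
    intro a b hb hab
    have hv : b.val = a.val + 1 := le_antisymm hb hab
    have hal : a.val < l := by omega
    have ha : a = (⟨a.val, hal⟩ : Fin l).castSucc := Fin.ext rfl
    have hbb : b = (⟨a.val, hal⟩ : Fin l).succ := Fin.ext (by simp [hv])
    rw [ha, hbb]
    exact Finset.le_sup (f := id) (consec_mem ε _)
  | succ k ih =>
    intro a b hb hab
    by_cases hc : b.val ≤ a.val + 1 + k
    · exact ih a b hc hab
    · have hsv : a.val + 1 < l + 1 := by omega
      set s : Fin (l + 1) := ⟨a.val + 1, hsv⟩ with hs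
      have h1 : a < s := by simp [hs, Fin.lt_def]
      have h2 : s < b := by rw [Fin.lt_def]; simp only [hs]; omega
      rw [delta_triple (hε a s h1) (hε s b h2)]
      exact max_le (ih a s (by simp only [hs]; omega) h1)
        (ih s b (by simp only [hs]; omega) h2)

lemma delta_le_sup' {n l : ℕ} (ε : Fin (l + 1) → Fin n → Bool)
    (hε : ∀ i j : Fin (l + 1), i < j → bval (ε i) < bval (ε j))
    (a b : Fin (l + 1)) (hab : a < b) :
    delta (ε a) (ε b) ≤ (Dset ε).sup id :=
  delta_le_sup ε hε b.val a b (by omega) hab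

lemma delta_eq_sup_of {n l : ℕ} (ε : Fin (l + 1) → Fin n → Bool)
    (hε : ∀ i j : Fin (l + 1), i < j → bval (ε i) < bval (ε j))
    (p : Fin l) (hp : (Dset ε).sup id = delta (ε p.castSucc) (ε p.succ))
    (a b : Fin (l + 1)) (ha : a ≤ p.castSucc) (hb : p.succ ≤ b) :
    delta (ε a) (ε b) = (Dset ε).sup id := by
  have hpcs : p.castSucc < p.succ := Fin.castSucc_lt_succ (i := p)
  have step1 : delta (ε p.castSucc) (ε b) = (Dset ε).sup id := by
    rcases eq_or_lt_of_le hb with h | h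
    · rw [← h, hp]
    · rw [delta_triple (hε _ _ hpcs) (hε _ _ h), ← hp]
      exact max_eq_left (delta_le_sup' ε hε _ _ h)
  rcases eq_or_lt_of_le ha with h | h
  · rw [h, step1]
  · have hab : a < b := lt_of_lt_of_le (lt_of_lt_of_le h hpcs.le) hb
    have hpb : p.castSucc < b := lt_of_lt_of_le hpcs hb
    rw [delta_triple (hε _ _ h) (hε _ _ hpb), step1]
    exact max_eq_right (delta_le_sup' ε hε _ _ h)

/-- Let `ε₁ < ⋯ < ε_{l+1}` be a chain in `T = {0,1}ⁿ` with `l ≥ 2` and let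
`Δ₁ = max D`. Then in the graph `J`, the vertex `Δ₁` is adjacent to every other
element of `D`; in particular `J` has at least `|D| - 1` edges. -/
theorem max_Dset_adj_all {n l : ℕ} (hl : 2 ≤ l)
    (ε : Fin (l + 1) → Fin n → Bool)
    (hε : ∀ i j : Fin (l + 1), i < j → bval (ε i) < bval (ε j)) :
    (∀ x ∈ Dset ε, x ≠ (Dset ε).sup id → JAdj ε ((Dset ε).sup id) x) ∧
      (Dset ε).card - 1 ≤ (Jedges ε).card := by
  classical
  have hDne : (Dset ε).Nonempty := by
    refine ⟨delta (ε (⟨0, by omega⟩ : Fin l).castSucc) (ε (⟨0, by omega⟩ : Fin l).succ),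
      consec_mem ε _⟩
  obtain ⟨Δ, hΔmem, hΔ⟩ := Finset.exists_mem_eq_sup (Dset ε) hDne id
  simp only [id] at hΔ
  have hΔD : (Dset ε).sup id ∈ Dset ε := by rw [hΔ]; exact hΔmem
  obtain ⟨p, _, hpΔ⟩ := Finset.mem_image.mp hΔD
  have hadj : ∀ x ∈ Dset ε, x ≠ (Dset ε).sup id → JAdj ε ((Dset ε).sup id) x := by
    intro x hx hne
    obtain ⟨q, _, hqx⟩ := Finset.mem_image.mp hx
    refine ⟨hΔD, hx, fun h => hne h.symm, ?_⟩
    rcases lt_trichotomy q.val p.val with hqp | hqp | hqp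
    · refine ⟨q.castSucc, q.succ, p.succ, Fin.castSucc_lt_succ (i := q), ?_, ?_⟩
      · rw [Fin.lt_def]; simp only [Fin.val_succ, Fin.coe_castSucc]; omega
      · have hds : delta (ε q.succ) (ε p.succ) = (Dset ε).sup id :=
          delta_eq_sup_of ε hε p hpΔ.symm q.succ p.succ
            (by rw [Fin.le_def]; simp only [Fin.val_succ, Fin.coe_castSucc]; omega) (le_refl _)
      
        rw [hqx, hds, Finset.pair_comm]
    · exfalso
      apply hne
      have hq : q = p := Fin.ext hqp
      rw [← hqx, hq, hpΔ]
    · refine ⟨p.castSucc, q.castSucc, q.succ, ?_, Fin.castSucc_lt_succ (i := q), ?_⟩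
      · rw [Fin.lt_def]; simp only [Fin.val_succ, Fin.coe_castSucc]; omega
      · have hds : delta (ε p.castSucc) (ε q.castSucc) = (Dset ε).sup id :=
          delta_eq_sup_of ε hε p hpΔ.symm p.castSucc q.castSucc
            (le_refl _) (by rw [Fin.le_def]; simp only [Fin.val_succ, Fin.coe_castSucc]; omega)
        rw [hqx, hds]
  refine ⟨hadj, ?_⟩
  have hcard : (Dset ε).card - 1 = ((Dset ε).erase ((Dset ε).sup id)).card :=
    (Finset.card_erase_of_mem hΔD).symm
  rw [hcard]
  have himg : ((Dset ε).erase ((Dset ε).sup id)).card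
      = (((Dset ε).erase ((Dset ε).sup id)).image (fun x => (x, (Dset ε).sup id))).card :=
    (Finset.card_image_of_injective _ (fun a b h => (Prod.mk.injEq _ _ _ _).mp h |>.1)).symm
  rw [himg]
  apply Finset.card_le_card
  intro pr hpr
  obtain ⟨x, hxe, rfl⟩ := Finset.mem_image.mp hpr
  have hxD := Finset.mem_of_mem_erase hxe
  have hxne := Finset.ne_of_mem_erase hxe
  have hxlt : x < (Dset ε).sup id :=
    lt_of_le_of_ne (Finset.le_sup (f := id) hxD) hxne
  have hJ := hadj x hxD hxne
  refine Finset.mem_filter.mpr ⟨Finset.mem_product.mpr ⟨hxD, hΔD⟩, hxlt, ?_⟩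
  obtain ⟨h1, h2, h3, r, s, t, hrs, hst, hset⟩ := hJ
  exact ⟨h2, h1, fun h => h3 h.symm, r, s, t, hrs, hst, by rw [Finset.pair_comm, hset]⟩
end

section
/- For all sufficiently large l the following holds: for every n and every chain ε_1 < ε_2 < ⋯ < ε_{l+1} in T = {0,1}^n, the associated graph J has at least (1/10)·d·log₂ log₂ (l+1) edges, where d = |D| is the number of distinct consecutive δ-values. -/
open Filter

namespace JLB


lemma sum_two_pow (m : ℕ) : ∑ k ∈ Finset.range m, 2^k = 2^m - 1 := by
  induction m with
  | zero => simp
  | succ m ih =>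
    rw [Finset.sum_range_succ, ih, pow_succ]
    have : 1 ≤ 2^m := Nat.one_le_two_pow
    omega

lemma bval_lt {n : ℕ} {x y : Fin n → Bool} {c : Fin n} (hx : x c = false) (hy : y c = true)
    (h : ∀ i, c < i → x i = y i) : bval x < bval y := by
  classical
  unfold bval
  rw [← Finset.sum_filter_add_sum_filter_not Finset.univ (fun i => c < i)
        (fun i => if x i then 2 ^ (i : ℕ) else 0),
      ← Finset.sum_filter_add_sum_filter_not Finset.univ (fun i => c < i)
        (fun i => if y i then 2 ^ (i : ℕ) else 0)]
  have hhigh : ∑ i ∈ Finset.univ.filter (fun i => c < i), (if x i then 2 ^ (i : ℕ) else 0)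
      = ∑ i ∈ Finset.univ.filter (fun i => c < i), (if y i then 2 ^ (i : ℕ) else 0) := by
    refine Finset.sum_congr rfl fun i hi => ?_
    rw [h i (Finset.mem_filter.1 hi).2]
  rw [hhigh]
  have hins : Finset.univ.filter (fun i : Fin n => ¬ c < i)
      = insert c (Finset.univ.filter (fun i : Fin n => i < c)) := by
    ext i
    simp only [Finset.mem_filter, Finset.mem_univ, true_and, Finset.mem_insert, not_lt]
    constructor
    · intro hi
      rcases lt_or_eq_of_le hi with h' | h'
      · exact Or.inr h'
      · exact Or.inl h'
    · rintro (rfl | h')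
      · exact le_refl _
      · exact le_of_lt h'
  have hnotmem : c ∉ Finset.univ.filter (fun i : Fin n => i < c) := by simp
  have hlowx : ∑ i ∈ Finset.univ.filter (fun i : Fin n => ¬ c < i),
      (if x i then 2 ^ (i : ℕ) else 0) < 2 ^ (c : ℕ) := by
    rw [hins, Finset.sum_insert hnotmem, hx]
    simp only [if_false, Bool.false_eq_true, zero_add]
    calc ∑ i ∈ Finset.univ.filter (fun i : Fin n => i < c), (if x i then 2 ^ (i : ℕ) else 0)
        ≤ ∑ i ∈ Finset.univ.filter (fun i : Fin n => i < c), 2 ^ (i : ℕ) := by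
          refine Finset.sum_le_sum fun i _ => ?_
          split <;> simp
      _ = ∑ k ∈ Finset.range (c : ℕ), 2 ^ k := by
          have himg : (Finset.univ.filter (fun i : Fin n => i < c)).image Fin.val
              = Finset.range (c : ℕ) := by
            ext k
            simp only [Finset.mem_image, Finset.mem_filter, Finset.mem_univ, true_and,
              Finset.mem_range, Fin.lt_def]
            constructor
            · rintro ⟨i, hi, rfl⟩; exact hi
            · intro hk
              exact ⟨⟨k, lt_trans hk c.isLt⟩, hk, rfl⟩
          rw [← himg, Finset.sum_image (fun i _ j _ hij => Fin.ext hij)]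
      _ = 2 ^ (c : ℕ) - 1 := sum_two_pow _
      _ < 2 ^ (c : ℕ) := by have : 1 ≤ 2^(c:ℕ) := Nat.one_le_two_pow; omega
  have hlowy : 2 ^ (c : ℕ) ≤ ∑ i ∈ Finset.univ.filter (fun i : Fin n => ¬ c < i),
      (if y i then 2 ^ (i : ℕ) else 0) := by
    rw [hins, Finset.sum_insert hnotmem, hy]
    simp only [if_true]
    exact Nat.le_add_right _ _
  omega

lemma delta_spec {n : ℕ} {x y : Fin n → Bool} (hxy : bval x < bval y) :
    ∃ hc : delta x y < n, x ⟨delta x y, hc⟩ = false ∧ y ⟨delta x y, hc⟩ = true ∧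
      ∀ i : Fin n, delta x y < (i : ℕ) → x i = y i := by
  classical
  have hne : x ≠ y := by
    intro h; rw [h] at hxy; exact lt_irrefl _ hxy
  have hfne : (Finset.univ.filter fun i => x i ≠ y i).Nonempty := by
    rcases Function.ne_iff.1 hne with ⟨i, hi⟩
    exact ⟨i, by simp [hi]⟩
  obtain ⟨c, hcmem, hcsup⟩ := Finset.exists_mem_eq_sup _ hfne Fin.val
  have hd : delta x y = (c : ℕ) := hcsup
  have hc : delta x y < n := hd ▸ c.isLt
  have habove : ∀ i : Fin n, delta x y < (i : ℕ) → x i = y i := by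
    intro i hi
    by_contra hne'
    have : (i : ℕ) ≤ delta x y := Finset.le_sup (by simp [hne'])
    omega
  have hcx : x c ≠ y c := (Finset.mem_filter.1 hcmem).2
  have hceq : (⟨delta x y, hc⟩ : Fin n) = c := Fin.ext hd
  have hxc : x c = false := by
    rcases Bool.eq_false_or_eq_true (x c) with hx | hx
    swap
    · exact hx
    · exfalso
      have hyc : y c = false := by
        rcases Bool.eq_false_or_eq_true (y c) with hy | hy
        swap
        · exact hy
        · exact absurd (hx.trans hy.symm) hcx
      have : bval y < bval x :=
        bval_lt hyc hx (fun i hi => (habove i (by rw [hd]; exact hi)).symm)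
      omega
  have hyc : y c = true := by
    rcases Bool.eq_false_or_eq_true (y c) with hy | hy
    · exact hy
    · exact absurd (hxc.trans hy.symm) hcx
  refine ⟨hc, ?_, ?_, habove⟩ <;> rw [hceq] <;> assumption

lemma delta_eq_of {n : ℕ} {x y : Fin n → Bool} (c : Fin n) (hne : x c ≠ y c)
    (hab : ∀ i : Fin n, (c : ℕ) < (i : ℕ) → x i = y i) : delta x y = (c : ℕ) := by
  classical
  refine le_antisymm (Finset.sup_le fun i hi => ?_) (Finset.le_sup (by simp [hne]))
  simp only [Finset.mem_filter, Finset.mem_univ, true_and] at hi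
  by_contra h
  exact hi (hab i (by omega))

section Chain

variable {n l : ℕ} (ε : Fin (l + 1) → Fin n → Bool)

/-- natural-number indexed version of the chain -/
def F (i : ℕ) : Fin n → Bool := ε ⟨min i l, Nat.lt_succ_of_le (min_le_right i l)⟩

def dlt (i j : ℕ) : ℕ := delta (F ε i) (F ε j)

variable (hm : ∀ i j : Fin (l + 1), i < j → bval (ε i) < bval (ε j))

lemma F_eq {i : ℕ} (h : i ≤ l) : F ε i = ε ⟨i, Nat.lt_succ_of_le h⟩ := by
  simp [F, Nat.min_eq_left h]

include hm in
lemma bmono {i j : ℕ} (hij : i < j) (hj : j ≤ l) : bval (F ε i) < bval (F ε j) := by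
  rw [F_eq ε (le_trans (le_of_lt hij) hj), F_eq ε hj]
  exact hm _ _ (by simp [Fin.lt_def]; omega)

include hm in
lemma dlt_spec {i j : ℕ} (hij : i < j) (hj : j ≤ l) :
    ∃ hc : dlt ε i j < n, F ε i ⟨dlt ε i j, hc⟩ = false ∧ F ε j ⟨dlt ε i j, hc⟩ = true ∧
      ∀ c : Fin n, dlt ε i j < (c : ℕ) → F ε i c = F ε j c :=
  delta_spec (bmono ε hm hij hj)

include hm in
lemma dlt_max {i j k : ℕ} (h1 : i < j) (h2 : j < k) (hk : k ≤ l) :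
    dlt ε i k = max (dlt ε i j) (dlt ε j k) ∧ dlt ε i j ≠ dlt ε j k := by
  have hj : j ≤ l := le_trans (le_of_lt h2) hk
  obtain ⟨ha, hxa, hya, haab⟩ := dlt_spec ε hm h1 hj
  obtain ⟨hb, hyb, hzb, hbab⟩ := dlt_spec ε hm h2 hk
  have hne : dlt ε i j ≠ dlt ε j k := by
    intro hab
    have hmk : (⟨dlt ε i j, ha⟩ : Fin n) = ⟨dlt ε j k, hb⟩ := Fin.ext hab
    rw [hmk, hyb] at hya
    exact Bool.false_ne_true hya
  rcases lt_or_gt_of_ne hne with hab | hab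
  · -- a < b, dlt i k = b
    refine ⟨?_, hne⟩
    rw [max_eq_right (le_of_lt hab)]
    refine delta_eq_of ⟨dlt ε j k, hb⟩ ?_ ?_
    · have hx : F ε i ⟨dlt ε j k, hb⟩ = F ε j ⟨dlt ε j k, hb⟩ := haab _ hab
      rw [hx, hyb, hzb]
      simp
    · intro i' hi'
      rw [haab i' (lt_trans hab hi'), hbab i' hi']
  · -- b < a, dlt i k = a
    refine ⟨?_, hne⟩
    rw [max_eq_left (le_of_lt hab)]
    refine delta_eq_of ⟨dlt ε i j, ha⟩ ?_ ?_
    · have hz : F ε j ⟨dlt ε i j, ha⟩ = F ε k ⟨dlt ε i j, ha⟩ := hbab _ hab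
      rw [← hz, hxa, hya]
      simp
    · intro i' hi'
      rw [haab i' hi', hbab i' (lt_trans hab hi')]

include hm in
lemma dlt_exists_step : ∀ m : ℕ, ∀ i j : ℕ, i < j → j ≤ l → j - i ≤ m →
    ∃ p, i ≤ p ∧ p < j ∧ dlt ε p (p + 1) = dlt ε i j := by
  intro m
  induction m with
  | zero => intro i j h1 _ h3; omega
  | succ m ih =>
    intro i j h1 h2 h3
    rcases eq_or_lt_of_le (Nat.succ_le_of_lt h1) with he | hlt
    · exact ⟨i, le_refl i, h1, by rw [show i + 1 = j from he]⟩
    · -- i + 1 < j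
      have hstep : j - 1 < j := by omega
      have h4 : i < j - 1 := by omega
      have h5 : j - 1 + 1 = j := by omega
      obtain ⟨hmax, _⟩ := dlt_max ε hm h4 hstep h2
      rcases max_choice (dlt ε i (j-1)) (dlt ε (j-1) j) with hc | hc
      · obtain ⟨p, hp1, hp2, hp3⟩ := ih i (j-1) h4 (by omega) (by omega)
        exact ⟨p, hp1, by omega, by rw [hp3, ← hc, ← hmax]⟩
      · exact ⟨j - 1, by omega, by omega, by rw [h5, ← hc, ← hmax]⟩

include hm in
lemma dlt_step_le {i p j : ℕ} (h1 : i ≤ p) (h2 : p < j) (hj : j ≤ l) :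
    dlt ε p (p + 1) ≤ dlt ε i j := by
  have base : ∀ q j' : ℕ, q < j' → j' ≤ l → dlt ε q (q+1) ≤ dlt ε q j' := by
    intro q j' hqj hj'
    rcases eq_or_lt_of_le (Nat.succ_le_of_lt hqj) with he | hlt
    · rw [show q + 1 = j' from he]
    · obtain ⟨hmax, _⟩ := dlt_max ε hm (show q < q + 1 by omega) hlt hj'
      rw [hmax]; exact le_max_left _ _
  rcases eq_or_lt_of_le h1 with he | hlt
  · subst he; exact base i j h2 hj
  · obtain ⟨hmax, _⟩ := dlt_max ε hm hlt h2 hj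
    calc dlt ε p (p+1) ≤ dlt ε p j := base p j h2 hj
    _ ≤ dlt ε i j := by rw [hmax]; exact le_max_right _ _

include hm in
lemma dlt_sub_le {lo r t hi : ℕ} (h1 : lo ≤ r) (h2 : r < t) (h3 : t ≤ hi) (hhi : hi ≤ l) :
    dlt ε r t ≤ dlt ε lo hi := by
  obtain ⟨p, hp1, hp2, hp3⟩ := dlt_exists_step ε hm (t - r) r t h2 (le_trans h3 hhi) (le_refl _)
  rw [← hp3]
  exact dlt_step_le ε hm (le_trans h1 hp1) (by omega) hhi

include hm in
lemma step_unique {lo hi p q : ℕ} (hp1 : lo ≤ p) (hp2 : p < hi) (hq1 : lo ≤ q) (hq2 : q < hi)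
    (hhi : hi ≤ l) (hdp : dlt ε p (p + 1) = dlt ε lo hi) (hdq : dlt ε q (q + 1) = dlt ε lo hi) :
    p = q := by
  have key : ∀ p' q' : ℕ, lo ≤ p' → q' < hi → p' < q' →
      dlt ε p' (p'+1) = dlt ε lo hi → dlt ε q' (q'+1) = dlt ε lo hi → False := by
    intro p' q' hp1' hq2' hpq hdp' hdq'
    obtain ⟨_, hne⟩ := dlt_max ε hm hpq (show q' < q' + 1 by omega) (by omega)
    have hle : dlt ε p' q' ≤ dlt ε lo hi :=
      dlt_sub_le ε hm hp1' hpq (by omega) hhi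
    have hge : dlt ε lo hi ≤ dlt ε p' q' := by
      rw [← hdp']
      exact dlt_step_le ε hm (le_refl p') hpq (by omega)
    exact hne (by omega)
  rcases lt_trichotomy p q with h | h | h
  · exact absurd (key p q hp1 hq2 h hdp hdq) (by simp)
  · exact h
  · exact absurd (key q p hq1 hp2 h hdq hdp) (by simp)

open Finset in
/-- ancestor values of position `j` within interval `[lo, hi]` -/
def Sanc (lo hi j : ℕ) : Finset ℕ :=
  ((Finset.Icc lo j) ×ˢ (Finset.Icc (j + 1) hi)).image fun p => dlt ε p.1 p.2

lemma mem_Sanc_iff {lo hi j b : ℕ} :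
    b ∈ Sanc ε lo hi j ↔ ∃ r t, lo ≤ r ∧ r ≤ j ∧ j + 1 ≤ t ∧ t ≤ hi ∧ dlt ε r t = b := by
  simp only [Sanc, Finset.mem_image, Finset.mem_product, Finset.mem_Icc, Prod.exists]
  constructor
  · rintro ⟨r, t, ⟨⟨h1, h2⟩, h3, h4⟩, h5⟩
    exact ⟨r, t, h1, h2, h3, h4, h5⟩
  · rintro ⟨r, t, h1, h2, h3, h4, h5⟩
    exact ⟨r, t, ⟨⟨h1, h2⟩, h3, h4⟩, h5⟩

lemma self_mem_Sanc {lo hi j : ℕ} (h1 : lo ≤ j) (h2 : j < hi) :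
    dlt ε j (j + 1) ∈ Sanc ε lo hi j :=
  mem_Sanc_iff ε |>.2 ⟨j, j + 1, h1, le_refl j, le_refl _, h2, rfl⟩

include hm in
lemma Sanc_split_left {lo hi p j : ℕ} (hlo : lo ≤ j) (hjp : j < p) (hp : p < hi) (hhi : hi ≤ l)
    (hM : dlt ε p (p + 1) = dlt ε lo hi) :
    Sanc ε lo hi j = insert (dlt ε lo hi) (Sanc ε lo p j) ∧
      dlt ε lo hi ∉ Sanc ε lo p j := by
  constructor
  · ext b
    simp only [Finset.mem_insert]
    constructor
    · intro hb
      obtain ⟨r, t, h1, h2, h3, h4, h5⟩ := mem_Sanc_iff ε |>.1 hb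
      rcases le_or_gt t p with htp | htp
      · exact Or.inr (mem_Sanc_iff ε |>.2 ⟨r, t, h1, h2, h3, htp, h5⟩)
      · left
        rw [← h5]
        have hle : dlt ε r t ≤ dlt ε lo hi := dlt_sub_le ε hm h1 (by omega) h4 hhi
        have hge : dlt ε lo hi ≤ dlt ε r t := by
          rw [← hM]
          exact dlt_step_le ε hm (by omega) (by omega) (le_trans h4 hhi)
        omega
    · rintro (rfl | hb)
      · exact mem_Sanc_iff ε |>.2 ⟨lo, hi, le_refl lo, hlo, by omega, le_refl hi, rfl⟩
      · obtain ⟨r, t, h1, h2, h3, h4, h5⟩ := mem_Sanc_iff ε |>.1 hb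
        exact mem_Sanc_iff ε |>.2 ⟨r, t, h1, h2, h3, by omega, h5⟩
  · intro hb
    obtain ⟨r, t, h1, h2, h3, h4, h5⟩ := mem_Sanc_iff ε |>.1 hb
    obtain ⟨q, hq1, hq2, hq3⟩ := dlt_exists_step ε hm (t - r) r t (by omega) (by omega) (le_refl _)
    have : q = p := step_unique ε hm (le_trans h1 hq1) (by omega) (by omega) hp hhi
      (by rw [hq3, h5]) hM
    omega

include hm in
lemma Sanc_split_right {lo hi p j : ℕ} (hlo : lo ≤ p) (hjp : p < j) (hp : j < hi) (hhi : hi ≤ l)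
    (hM : dlt ε p (p + 1) = dlt ε lo hi) :
    Sanc ε lo hi j = insert (dlt ε lo hi) (Sanc ε (p + 1) hi j) ∧
      dlt ε lo hi ∉ Sanc ε (p + 1) hi j := by
  constructor
  · ext b
    simp only [Finset.mem_insert]
    constructor
    · intro hb
      obtain ⟨r, t, h1, h2, h3, h4, h5⟩ := mem_Sanc_iff ε |>.1 hb
      rcases le_or_gt (p + 1) r with hrp | hrp
      · exact Or.inr (mem_Sanc_iff ε |>.2 ⟨r, t, hrp, h2, h3, h4, h5⟩)
      · left
        rw [← h5]
        have hle : dlt ε r t ≤ dlt ε lo hi := dlt_sub_le ε hm h1 (by omega) h4 hhi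
        have hge : dlt ε lo hi ≤ dlt ε r t := by
          rw [← hM]
          exact dlt_step_le ε hm (by omega) (by omega) (le_trans h4 hhi)
        omega
    · rintro (rfl | hb)
      · exact mem_Sanc_iff ε |>.2 ⟨lo, hi, le_refl lo, by omega, by omega, le_refl hi, rfl⟩
      · obtain ⟨r, t, h1, h2, h3, h4, h5⟩ := mem_Sanc_iff ε |>.1 hb
        exact mem_Sanc_iff ε |>.2 ⟨r, t, by omega, h2, h3, h4, h5⟩
  · intro hb
    obtain ⟨r, t, h1, h2, h3, h4, h5⟩ := mem_Sanc_iff ε |>.1 hb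
    obtain ⟨q, hq1, hq2, hq3⟩ := dlt_exists_step ε hm (t - r) r t (by omega) (by omega) (le_refl _)
    have : q = p := step_unique ε hm (by omega) (by omega) hlo (by omega) hhi
      (by rw [hq3, h5]) hM
    omega

include hm in
lemma count_small : ∀ m lo hi : ℕ, hi - lo ≤ m → hi ≤ l → ∀ h : ℕ,
    ((Finset.Ico lo hi).filter fun j => (Sanc ε lo hi j).card ≤ h).card ≤ 2 ^ h - 1 := by
  intro m
  induction m with
  | zero =>
    intro lo hi h1 _ h
    have : Finset.Ico lo hi = ∅ := by
      rw [Finset.Ico_eq_empty_iff]; omega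
    simp [this]
  | succ m ih =>
    intro lo hi h1 hhi h
    rcases le_or_gt hi lo with hord | hord
    · have : Finset.Ico lo hi = ∅ := by
        rw [Finset.Ico_eq_empty_iff]; omega
      simp [this]
    rcases Nat.eq_zero_or_pos h with rfl | hpos
    · have : (Finset.Ico lo hi).filter (fun j => (Sanc ε lo hi j).card ≤ 0) = ∅ := by
        refine Finset.filter_eq_empty_iff.2 fun j hj => ?_
        simp only [Finset.mem_Ico] at hj
        have hne : (Sanc ε lo hi j).Nonempty := ⟨_, self_mem_Sanc ε hj.1 hj.2⟩
        have := Finset.card_pos.2 hne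
        omega
      rw [this]
      simp
    obtain ⟨h, rfl⟩ : ∃ h', h = h' + 1 := ⟨h - 1, by omega⟩
    obtain ⟨p, hp1, hp2, hp3⟩ :=
      dlt_exists_step ε hm (hi - lo) lo hi hord hhi (le_refl _)
    set Bl := (Finset.Ico lo p).filter (fun j => (Sanc ε lo p j).card ≤ h) with hBl
    set Br := (Finset.Ico (p + 1) hi).filter (fun j => (Sanc ε (p + 1) hi j).card ≤ h) with hBr
    have hsub : (Finset.Ico lo hi).filter (fun j => (Sanc ε lo hi j).card ≤ h + 1)
        ⊆ insert p (Bl ∪ Br) := by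
      intro j hj
      simp only [Finset.mem_filter, Finset.mem_Ico] at hj
      obtain ⟨⟨hj1, hj2⟩, hj3⟩ := hj
      rcases lt_trichotomy j p with hjo | rfl | hjo
      · have hspl := Sanc_split_left ε hm hj1 hjo hp2 hhi hp3
        have hcard : (Sanc ε lo hi j).card = (Sanc ε lo p j).card + 1 := by
          rw [hspl.1, Finset.card_insert_of_notMem hspl.2]
        refine Finset.mem_insert.2 (Or.inr (Finset.mem_union_left _ ?_))
        rw [hBl]
        refine Finset.mem_filter.2 ⟨Finset.mem_Ico.2 ⟨hj1, hjo⟩, by omega⟩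
      · exact Finset.mem_insert_self _ _
      · have hspl := Sanc_split_right ε hm hp1 hjo hj2 hhi hp3
        have hcard : (Sanc ε lo hi j).card = (Sanc ε (p + 1) hi j).card + 1 := by
          rw [hspl.1, Finset.card_insert_of_notMem hspl.2]
        refine Finset.mem_insert.2 (Or.inr (Finset.mem_union_right _ ?_))
        rw [hBr]
        refine Finset.mem_filter.2 ⟨Finset.mem_Ico.2 ⟨by omega, hj2⟩, by omega⟩
    have hcl : Bl.card ≤ 2 ^ h - 1 := ih lo p (by omega) (by omega) h
    have hcr : Br.card ≤ 2 ^ h - 1 := ih (p + 1) hi (by omega) hhi h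
    calc ((Finset.Ico lo hi).filter fun j => (Sanc ε lo hi j).card ≤ h + 1).card
        ≤ (insert p (Bl ∪ Br)).card := Finset.card_le_card hsub
      _ ≤ 1 + (Bl.card + Br.card) := by
          refine le_trans (Finset.card_insert_le _ _) ?_
          have := Finset.card_union_le Bl Br
          omega
      _ ≤ 2 ^ (h + 1) - 1 := by
          have h2 : 1 ≤ 2 ^ h := Nat.one_le_two_pow
          have : (2:ℕ) ^ (h+1) = 2 * 2 ^ h := by ring
          omega


lemma Dset_eq : Dset ε = (Finset.range l).image (fun p => dlt ε p (p + 1)) := by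
  unfold Dset
  ext b
  simp only [Finset.mem_image, Finset.mem_univ, true_and, Finset.mem_range]
  constructor
  · rintro ⟨i, rfl⟩
    refine ⟨i.val, i.isLt, ?_⟩
    unfold dlt
    rw [F_eq ε (le_of_lt i.isLt), F_eq ε i.isLt]
    congr 1
  · rintro ⟨p, hp, rfl⟩
    refine ⟨⟨p, hp⟩, ?_⟩
    unfold dlt
    rw [F_eq ε (le_of_lt hp), F_eq ε hp]
    congr 1

lemma step_mem_Dset {p : ℕ} (hp : p < l) : dlt ε p (p + 1) ∈ Dset ε := by
  rw [Dset_eq]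
  exact Finset.mem_image.2 ⟨p, Finset.mem_range.2 hp, rfl⟩

include hm in
lemma dlt_mem_Dset {i j : ℕ} (hij : i < j) (hj : j ≤ l) : dlt ε i j ∈ Dset ε := by
  obtain ⟨p, hp1, hp2, hp3⟩ := dlt_exists_step ε hm (j - i) i j hij hj (le_refl _)
  rw [← hp3]
  exact step_mem_Dset ε (by omega)

lemma JAdj_of_nat {a b : ℕ} (ha : a ∈ Dset ε) (hb : b ∈ Dset ε) (hne : a ≠ b)
    {r s t : ℕ} (hrs : r < s) (hst : s < t) (ht : t ≤ l)
    (hab : ({a, b} : Finset ℕ) = {dlt ε r s, dlt ε s t}) : JAdj ε a b := by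
  refine ⟨ha, hb, hne, ⟨r, by omega⟩, ⟨s, by omega⟩, ⟨t, by omega⟩, ?_, ?_, ?_⟩
  · simp [Fin.lt_def]; omega
  · simp [Fin.lt_def]; omega
  · rw [hab]
    unfold dlt
    rw [F_eq ε (by omega : r ≤ l), F_eq ε (by omega : s ≤ l), F_eq ε ht]

lemma JAdj_symm {a b : ℕ} (h : JAdj ε a b) : JAdj ε b a := by
  obtain ⟨ha, hb, hne, r, s, t, h1, h2, h3⟩ := h
  exact ⟨hb, ha, hne.symm, r, s, t, h1, h2, by rw [Finset.pair_comm b a, h3]⟩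

include hm in
lemma edge_of {r j t : ℕ} (h1 : r ≤ j) (h2 : j < t) (ht : t ≤ l)
    (hne : dlt ε j (j + 1) ≠ dlt ε r t) : JAdj ε (dlt ε j (j + 1)) (dlt ε r t) := by
  have hjl : j < l := by omega
  have hmema : dlt ε j (j + 1) ∈ Dset ε := step_mem_Dset ε hjl
  have hmemb : dlt ε r t ∈ Dset ε := dlt_mem_Dset ε hm (by omega) ht
  rcases eq_or_lt_of_le h1 with hrj | hrj
  · -- r = j
    subst hrj
    rcases eq_or_lt_of_le (show r + 1 ≤ t by omega) with hteq | htlt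
    · rw [← hteq] at hne
      exact absurd rfl hne
    · obtain ⟨hmax, hd⟩ := dlt_max ε hm (show r < r + 1 by omega) htlt ht
      have hb : dlt ε r t = dlt ε (r + 1) t := by
        rcases max_choice (dlt ε r (r + 1)) (dlt ε (r + 1) t) with hc | hc
        · rw [hmax, hc] at hne; exact absurd rfl hne
        · rw [hmax, hc]
      refine JAdj_of_nat ε hmema hmemb hne (show r < r + 1 by omega) htlt ht ?_
      rw [hb]
  · -- r < j
    rcases eq_or_lt_of_le (show j + 1 ≤ t by omega) with hteq | htlt
    · -- t = j + 1
      obtain ⟨hmax, hd⟩ := dlt_max ε hm hrj (show j < j + 1 by omega) (by omega)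
      rw [← hteq] at hne hmemb ⊢
      have hb : dlt ε r (j + 1) = dlt ε r j := by
        rcases max_choice (dlt ε r j) (dlt ε j (j + 1)) with hc | hc
        · rw [hmax, hc]
        · rw [hmax, hc] at hne; exact absurd rfl hne
      refine JAdj_of_nat ε hmema hmemb hne hrj (show j < j + 1 by omega) (by omega) ?_
      rw [hb, Finset.pair_comm]
    · -- r < j, j + 1 < t
      obtain ⟨hmax1, _⟩ := dlt_max ε hm (show r < j + 1 by omega) htlt ht
      obtain ⟨hmax2, _⟩ := dlt_max ε hm hrj (show j < j + 1 by omega) (by omega)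
      rcases max_choice (dlt ε r (j + 1)) (dlt ε (j + 1) t) with hc | hc
      · -- dlt r t = dlt r (j+1) = max (dlt r j) (dlt j (j+1))
        have hb : dlt ε r t = dlt ε r j := by
          rcases max_choice (dlt ε r j) (dlt ε j (j + 1)) with hc2 | hc2
          · rw [hmax1, hc, hmax2, hc2]
          · rw [hmax1, hc, hmax2, hc2] at hne; exact absurd rfl hne
        refine JAdj_of_nat ε hmema hmemb hne hrj (show j < j + 1 by omega) (by omega) ?_
        rw [hb, Finset.pair_comm]
      · -- dlt r t = dlt (j+1) t
        have hb : dlt ε r t = dlt ε (j + 1) t := by rw [hmax1, hc]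
        refine JAdj_of_nat ε hmema hmemb hne (show j < j + 1 by omega) htlt ht ?_
        rw [hb]


set_option maxHeartbeats 1000000 in
open scoped Classical in
include hm in
lemma main_count (hl : 1 ≤ l) (h : ℕ) :
    ((Dset ε).card - (2 ^ h - 1)) * h ≤ 2 * (Jedges ε).card := by
  classical
  -- choice of a position for each value of D
  have hex : ∀ a ∈ Dset ε, ∃ p, p < l ∧ dlt ε p (p + 1) = a := by
    intro a ha
    rw [Dset_eq] at ha
    obtain ⟨p, hp, hpa⟩ := Finset.mem_image.1 ha
    exact ⟨p, Finset.mem_range.1 hp, hpa⟩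
  set jf : ℕ → ℕ := fun a => if hc : ∃ p, p < l ∧ dlt ε p (p + 1) = a then hc.choose else 0
    with hjf
  have hjfs : ∀ a ∈ Dset ε, jf a < l ∧ dlt ε (jf a) (jf a + 1) = a := by
    intro a ha
    obtain ⟨p, hp⟩ := hex a ha
    rw [hjf]
    simp only [dif_pos (⟨p, hp⟩ : ∃ p, p < l ∧ dlt ε p (p + 1) = a)]
    exact (⟨p, hp⟩ : ∃ p, p < l ∧ dlt ε p (p + 1) = a).choose_spec
  set bad := (Dset ε).filter (fun a => (Sanc ε 0 l (jf a)).card ≤ h) with hbad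
  set good := (Dset ε).filter (fun a => ¬ (Sanc ε 0 l (jf a)).card ≤ h) with hgood
  -- bad is small
  have hbadcard : bad.card ≤ 2 ^ h - 1 := by
    have hinj : Set.InjOn jf bad := by
      intro a ha b hb hab
      have h1 := (hjfs a (Finset.mem_filter.1 ha).1).2
      have h2 := (hjfs b (Finset.mem_filter.1 hb).1).2
      rw [← h1, ← h2, hab]
    have hmaps : ∀ a ∈ bad, jf a ∈ (Finset.Ico 0 l).filter
        (fun j => (Sanc ε 0 l j).card ≤ h) := by
      intro a ha
      obtain ⟨ha1, ha2⟩ := Finset.mem_filter.1 ha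
      exact Finset.mem_filter.2 ⟨Finset.mem_Ico.2 ⟨Nat.zero_le _, (hjfs a ha1).1⟩, ha2⟩
    calc bad.card ≤ ((Finset.Ico 0 l).filter (fun j => (Sanc ε 0 l j).card ≤ h)).card :=
          Finset.card_le_card_of_injOn jf hmaps hinj
      _ ≤ 2 ^ h - 1 := count_small ε hm l 0 l (by omega) (le_refl l) h
  have hgoodcard : (Dset ε).card - (2 ^ h - 1) ≤ good.card := by
    have := Finset.card_filter_add_card_filter_not
      (s := Dset ε) (p := fun a => (Sanc ε 0 l (jf a)).card ≤ h)
    have hgg : (Finset.filter (fun a => ¬(Sanc ε 0 l (jf a)).card ≤ h) (Dset ε)).card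
        = good.card := rfl
    have hbb : (Finset.filter (fun a => (Sanc ε 0 l (jf a)).card ≤ h) (Dset ε)).card
        = bad.card := rfl
    omega
  -- each good vertex has degree at least h
  have hdeg : ∀ a ∈ good, h ≤ ((Dset ε).filter (fun b => JAdj ε a b)).card := by
    intro a ha
    obtain ⟨ha1, ha2⟩ := Finset.mem_filter.1 ha
    obtain ⟨hj1, hj2⟩ := hjfs a ha1
    have hsub : (Sanc ε 0 l (jf a)).erase a ⊆ (Dset ε).filter (fun b => JAdj ε a b) := by
      intro b hb
      obtain ⟨hbne, hbmem⟩ := Finset.mem_erase.1 hb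
      obtain ⟨r, t, _, h2, h3, h4, h5⟩ := mem_Sanc_iff ε |>.1 hbmem
      have hadj : JAdj ε a b := by
        rw [← hj2, ← h5]
        exact edge_of ε hm h2 (by omega) h4 (by rw [hj2, h5]; exact hbne.symm)
      exact Finset.mem_filter.2 ⟨hadj.2.1, hadj⟩
    have hamem : a ∈ Sanc ε 0 l (jf a) := by
      have := self_mem_Sanc ε (lo := 0) (Nat.zero_le (jf a)) hj1
      rwa [hj2] at this
    have := Finset.card_erase_of_mem hamem
    have := Finset.card_le_card hsub
    omega
  -- sum of degrees equals number of adjacent ordered pairs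
  set P := (Dset ε ×ˢ Dset ε).filter (fun p : ℕ × ℕ => JAdj ε p.1 p.2) with hP
  have hsum : ∑ a ∈ Dset ε, ((Dset ε).filter (fun b => JAdj ε a b)).card = P.card := by
    rw [Finset.card_eq_sum_card_fiberwise
      (f := Prod.fst) (t := Dset ε) (fun x hx => (Finset.mem_product.1 (Finset.mem_filter.1 hx).1).1)]
    refine Finset.sum_congr rfl fun a ha => ?_
    have : P.filter (fun x => x.1 = a) = ({a} : Finset ℕ) ×ˢ ((Dset ε).filter (fun b => JAdj ε a b)) := by
      ext ⟨u, v⟩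
      simp only [hP, Finset.mem_filter, Finset.mem_product, Finset.mem_singleton]
      constructor
      · rintro ⟨⟨⟨hu, hv⟩, hadj⟩, rfl⟩
        exact ⟨rfl, hv, hadj⟩
      · rintro ⟨rfl, hv, hadj⟩
        exact ⟨⟨⟨ha, hv⟩, hadj⟩, rfl⟩
    rw [this, Finset.card_product, Finset.card_singleton, one_mul]
  -- P has at most twice the edges
  have hPle : P.card ≤ 2 * (Jedges ε).card := by
    have hsplit := Finset.card_filter_add_card_filter_not
      (s := P) (p := fun x : ℕ × ℕ => x.1 < x.2)
    have hP1 : P.filter (fun x : ℕ × ℕ => x.1 < x.2) = Jedges ε := by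
      unfold Jedges
      rw [hP, Finset.filter_filter]
      refine Finset.filter_congr fun x hx => ?_
      constructor
      · rintro ⟨h1, h2⟩; exact ⟨h2, h1⟩
      · rintro ⟨h1, h2⟩; exact ⟨h2, h1⟩
    have hP2 : (P.filter (fun x : ℕ × ℕ => ¬ x.1 < x.2)).card ≤ (Jedges ε).card := by
      refine Finset.card_le_card_of_injOn (fun x => (x.2, x.1)) ?_ ?_
      · intro x hx
        obtain ⟨hxP, hxlt⟩ := Finset.mem_filter.1 hx
        obtain ⟨hxprod, hadj⟩ := Finset.mem_filter.1 hxP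
        obtain ⟨hx1, hx2⟩ := Finset.mem_product.1 hxprod
        have hne : x.1 ≠ x.2 := hadj.2.2.1
        unfold Jedges
        refine Finset.mem_filter.2 ⟨Finset.mem_product.2 ⟨hx2, hx1⟩, ?_, JAdj_symm ε hadj⟩
        simp only at hxlt ⊢
        omega
      · intro x _ y _ hxy
        simp only [Prod.mk.injEq] at hxy
        exact Prod.ext hxy.2 hxy.1
    have hP1c := congrArg Finset.card hP1
    omega
  have hlower : good.card * h ≤ ∑ a ∈ Dset ε, ((Dset ε).filter (fun b => JAdj ε a b)).card := by
    calc good.card * h = ∑ _a ∈ good, h := by rw [Finset.sum_const, smul_eq_mul]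
      _ ≤ ∑ a ∈ good, ((Dset ε).filter (fun b => JAdj ε a b)).card :=
          Finset.sum_le_sum hdeg
      _ ≤ ∑ a ∈ Dset ε, ((Dset ε).filter (fun b => JAdj ε a b)).card :=
          Finset.sum_le_sum_of_subset (Finset.filter_subset _ _)
  have : ((Dset ε).card - (2 ^ h - 1)) * h ≤ good.card * h :=
    Nat.mul_le_mul_right h hgoodcard
  omega

include hm in
lemma chain_card : l + 1 ≤ 2 ^ (Dset ε).card := by
  classical
  have key : ∀ i j : Fin (l + 1), (i : ℕ) < (j : ℕ) →
      ∃ c : ℕ, ∃ hc : c < n, c ∈ Dset ε ∧ ε i ⟨c, hc⟩ ≠ ε j ⟨c, hc⟩ := by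
    intro i j hij
    have hj : (j : ℕ) ≤ l := by omega
    obtain ⟨hc, hxc, hyc, _⟩ := dlt_spec ε hm hij hj
    refine ⟨dlt ε i j, hc, dlt_mem_Dset ε hm hij hj, ?_⟩
    rw [F_eq ε (by omega : (i:ℕ) ≤ l)] at hxc
    rw [F_eq ε hj] at hyc
    have hi' : (⟨(i:ℕ), by omega⟩ : Fin (l+1)) = i := Fin.ext rfl
    have hj' : (⟨(j:ℕ), by omega⟩ : Fin (l+1)) = j := Fin.ext rfl
    rw [hi'] at hxc
    rw [hj'] at hyc
    rw [hxc, hyc]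
    simp
  have hinj : Function.Injective
      (fun (i : Fin (l + 1)) (c : {x // x ∈ Dset ε}) =>
        if hc : (c : ℕ) < n then ε i ⟨(c : ℕ), hc⟩ else false) := by
    intro i j hij
    by_contra hne
    have hne' : (i : ℕ) ≠ (j : ℕ) := fun hc => hne (Fin.ext hc)
    rcases Nat.lt_or_ge (i : ℕ) (j : ℕ) with hlt | hge
    · obtain ⟨c, hc, hcd, hcne⟩ := key i j hlt
      have := congrFun hij (⟨c, hcd⟩ : {x // x ∈ Dset ε})
      simp only [dif_pos hc] at this
      exact hcne this
    · obtain ⟨c, hc, hcd, hcne⟩ := key j i (by omega)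
      have := congrFun hij (⟨c, hcd⟩ : {x // x ∈ Dset ε})
      simp only [dif_pos hc] at this
      exact hcne this.symm
  have := Fintype.card_le_of_injective _ hinj
  simpa [Fintype.card_fun] using this


end Chain


end JLB

/-- For all sufficiently large `l`: for every `n` and every chain
`ε₁ < ⋯ < ε_{l+1}` in `T = {0,1}ⁿ`, the associated graph `J` has at least
`(1/10) · d · log₂ log₂ (l+1)` edges, where `d = |D|`. -/
theorem Jedges_lower_bound :
    ∀ᶠ l : ℕ in atTop, ∀ (n : ℕ) (ε : Fin (l + 1) → Fin n → Bool),
      (∀ i j : Fin (l + 1), i < j → bval (ε i) < bval (ε j)) →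
      (1 / 10 : ℝ) * (Dset ε).card * Real.logb 2 (Real.logb 2 (l + 1)) ≤
        ((Jedges ε).card : ℝ) := by
  filter_upwards [Filter.eventually_ge_atTop 65536] with l hl
  intro n ε hm
  set d := (Dset ε).card with hd
  set E := (Jedges ε).card with hE
  have hA : l + 1 ≤ 2 ^ d := JLB.chain_card ε hm
  have hd16 : 16 ≤ d := by
    by_contra hcon
    push_neg at hcon
    have h1 : 2 ^ d ≤ 2 ^ 15 := Nat.pow_le_pow_right (by norm_num) (by omega)
    have h2 : (2:ℕ) ^ 15 = 32768 := by norm_num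
    omega
  set Lg := Nat.log 2 d with hLg
  have hLg4 : 4 ≤ Lg := by
    rw [hLg]
    exact (Nat.le_log_iff_pow_le (by norm_num) (by omega)).2 (by norm_num; omega)
  have hpowle : 2 ^ Lg ≤ d := Nat.pow_log_le_self 2 (by omega)
  have hdlt : d < 2 ^ (Lg + 1) := Nat.lt_pow_succ_log_self (by norm_num) d
  set h := Lg - 1 with hh
  have h2h : 2 ^ h * 2 ≤ d := by
    have hsucc : h + 1 = Lg := by omega
    calc 2 ^ h * 2 = 2 ^ (h + 1) := (pow_succ 2 h).symm
      _ = 2 ^ Lg := by rw [hsucc]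
      _ ≤ d := hpowle
  have hmain : (d - (2 ^ h - 1)) * h ≤ 2 * E := JLB.main_count ε hm (by omega) h
  have hdh : d * h ≤ 4 * E := by
    have h2p : 1 ≤ 2 ^ h := Nat.one_le_two_pow
    have h1 : d ≤ 2 * (d - (2 ^ h - 1)) := by omega
    calc d * h ≤ 2 * (d - (2 ^ h - 1)) * h := Nat.mul_le_mul_right h h1
      _ = 2 * ((d - (2 ^ h - 1)) * h) := by ring
      _ ≤ 2 * (2 * E) := by omega
      _ = 4 * E := by ring
  -- move to the reals
  have hE4 : (d : ℝ) * (h : ℝ) ≤ 4 * (E : ℝ) := by exact_mod_cast hdh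
  have hdpos : (0:ℝ) < d := by
    have : (0:ℕ) < d := by omega
    exact_mod_cast this
  have hl1pos : (0:ℝ) < (l:ℝ) + 1 := by positivity
  have hstep1 : Real.logb 2 ((l:ℝ) + 1) ≤ (d:ℝ) := by
    have hcast : ((l:ℝ) + 1) ≤ (2:ℝ) ^ (d:ℕ) := by exact_mod_cast hA
    calc Real.logb 2 ((l:ℝ) + 1) ≤ Real.logb 2 ((2:ℝ) ^ (d:ℕ)) :=
          Real.logb_le_logb_of_le one_lt_two hl1pos hcast
      _ = (d:ℝ) := by
          rw [Real.logb_pow, Real.logb_self_eq_one one_lt_two, mul_one]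
  have hstep2 : (1:ℝ) ≤ Real.logb 2 ((l:ℝ) + 1) := by
    have h2le : (2:ℝ) ≤ (l:ℝ) + 1 := by
      have : (1:ℕ) ≤ l := by omega
      have : (1:ℝ) ≤ (l:ℝ) := by exact_mod_cast this
      linarith
    calc (1:ℝ) = Real.logb 2 2 := (Real.logb_self_eq_one one_lt_two).symm
      _ ≤ Real.logb 2 ((l:ℝ) + 1) := Real.logb_le_logb_of_le one_lt_two (by norm_num) h2le
  have hstep3 : Real.logb 2 (Real.logb 2 ((l:ℝ) + 1)) ≤ Real.logb 2 (d:ℝ) :=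
    Real.logb_le_logb_of_le one_lt_two (by linarith) hstep1
  have hstep4 : (4:ℝ) ≤ Real.logb 2 (d:ℝ) := by
    have h16 : (16:ℝ) ≤ (d:ℝ) := by exact_mod_cast hd16
    calc (4:ℝ) = Real.logb 2 ((2:ℝ) ^ (4:ℕ)) := by
          rw [Real.logb_pow, Real.logb_self_eq_one one_lt_two, mul_one]
          norm_num
      _ ≤ Real.logb 2 (d:ℝ) := by
          apply Real.logb_le_logb_of_le one_lt_two (by norm_num)
          norm_num
          linarith
  have hstep5 : Real.logb 2 (d:ℝ) - 2 ≤ (h:ℝ) := by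
    have hcast : (d:ℝ) ≤ (2:ℝ) ^ (Lg + 1 : ℕ) := by
      exact_mod_cast le_of_lt hdlt
    have hup : Real.logb 2 (d:ℝ) ≤ (Lg:ℝ) + 1 := by
      calc Real.logb 2 (d:ℝ) ≤ Real.logb 2 ((2:ℝ) ^ (Lg + 1 : ℕ)) :=
            Real.logb_le_logb_of_le one_lt_two hdpos hcast
        _ = (Lg:ℝ) + 1 := by
            rw [Real.logb_pow, Real.logb_self_eq_one one_lt_two, mul_one]
            push_cast
            ring
    have hhc : (h:ℝ) = (Lg:ℝ) - 1 := by
      rw [hh]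
      have : (1:ℕ) ≤ Lg := by omega
      push_cast [Nat.cast_sub this]
      ring
    linarith
  -- final chain
  have hXnonneg : 0 ≤ Real.logb 2 (Real.logb 2 ((l:ℝ) + 1)) :=
    Real.logb_nonneg one_lt_two hstep2
  set X := Real.logb 2 (Real.logb 2 ((l:ℝ) + 1)) with hX
  set L := Real.logb 2 (d:ℝ) with hL
  have key : (1/10:ℝ) * d * X ≤ (1/4:ℝ) * ((d:ℝ) * (L - 2)) := by
    have h1 : (1/10:ℝ) * d * X ≤ (1/10:ℝ) * d * L := by
      apply mul_le_mul_of_nonneg_left hstep3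
      positivity
    have h2 : (1/10:ℝ) * L ≤ (1/4:ℝ) * (L - 2) := by linarith
    nlinarith [hdpos.le]
  have hfin : (1/4:ℝ) * ((d:ℝ) * (L - 2)) ≤ (E:ℝ) := by
    have h1 : (d:ℝ) * (L - 2) ≤ (d:ℝ) * (h:ℝ) :=
      mul_le_mul_of_nonneg_left hstep5 hdpos.le
    linarith
  have : (1/10:ℝ) * d * X ≤ (E:ℝ) := le_trans key hfin
  exact this
end
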